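/- Consider the Nörlund logarithmic means of the Walsh–Fourier series, i.e. the Walsh–Nörlund means with weights q_0 := 1 and q_j := 1/j for j ≥ 1, so that t_n(f) = (1/Q_n) Σ_{k=1}^{n−1} S_k(f)/(n−k) + (q_0/Q_n) S_n(f) with Q_n = 1 + Σ_{j=1}^{n−1} 1/j, and let t*(f) := sup_{n≥1} |t_n(f)|. Then for every p ∈ (0, 1] the operator t* is not bounded from the dyadic Hardy space H_p[0,1) to L^p[0,1): there is no constant C with ‖t*(f)‖_{L^p} ≤ C ‖f‖_{H_p} for all f with ‖f‖_{H_p} < ∞. -/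

import Mathlib

open MeasureTheory Filter
open scoped ENNReal NNReal

noncomputable section

namespace Walsh

/-- Lebesgue measure restricted to `[0,1)`. -/
def μI : Measure ℝ := volume.restrict (Set.Ico (0:ℝ) 1)

/-- The `k`-th binary digit `x_k` of `x ∈ [0,1)`, using the expansion terminating
in `0`'s for dyadic rationals. -/
def digit (k : ℕ) (x : ℝ) : ℕ := (⌊x * 2 ^ (k + 1)⌋).toNat % 2

/-- `ε_k(n)`, the `k`-th binary coefficient of `n`. -/
def eps (k n : ℕ) : ℕ := if n.testBit k then 1 else 0

/-- Walsh–Paley function `w_n(x) = (-1)^{Σ_k ε_k(n) x_k}`. -/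
def walsh (n : ℕ) (x : ℝ) : ℝ :=
  (-1 : ℝ) ^ (∑ k ∈ Finset.range (n + 1), eps k n * digit k x)

/-- Walsh–Dirichlet kernel `D_n = Σ_{k=0}^{n-1} w_k`. -/
def D (n : ℕ) (x : ℝ) : ℝ := ∑ k ∈ Finset.range n, walsh k x

/-- Walsh–Fejér kernel `K_n = (1/n) Σ_{k=1}^{n} D_k`. -/
def K (n : ℕ) (x : ℝ) : ℝ := (1 / (n : ℝ)) * ∑ k ∈ Finset.Icc 1 n, D k x

/-- Partial sums `S_M(f) = Σ_{i=0}^{M-1} f̂(i) w_i` of the Walsh–Fourier series. -/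
def S (f : ℝ → ℝ) (M : ℕ) (x : ℝ) : ℝ :=
  ∑ i ∈ Finset.range M, (∫ t in Set.Ico (0:ℝ) 1, f t * walsh i t) * walsh i x

/-- `Q_n = q_0 + ⋯ + q_{n-1}`. -/
def Q (q : ℕ → ℝ) (n : ℕ) : ℝ := ∑ k ∈ Finset.range n, q k

/-- Walsh–Nörlund mean `t_n(f) = (1/Q_n) Σ_{k=1}^n q_{n-k} S_k(f)`. -/
def t (q : ℕ → ℝ) (n : ℕ) (f : ℝ → ℝ) (x : ℝ) : ℝ :=
  (1 / Q q n) * ∑ k ∈ Finset.Icc 1 n, q (n - k) * S f k x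

/-- Walsh–Nörlund kernel `F_n = (1/Q_n) Σ_{k=1}^n q_{n-k} D_k`. -/
def F (q : ℕ → ℝ) (n : ℕ) (x : ℝ) : ℝ :=
  (1 / Q q n) * ∑ k ∈ Finset.Icc 1 n, q (n - k) * D k x

/-- Maximal Nörlund operator `t^*(f) = sup_{n ≥ 1} |t_n(f)|`, valued in `ℝ≥0∞`. -/
def tstar (q : ℕ → ℝ) (f : ℝ → ℝ) (x : ℝ) : ℝ≥0∞ :=
  ⨆ n ∈ Set.Ici 1, ENNReal.ofReal |t q n f x|

/-- `L^p[0,1)` quasinorm (`0 < p ≤ 1`) of a real function, valued in `ℝ≥0∞`. -/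
def LpNorm (p : ℝ) (g : ℝ → ℝ) : ℝ≥0∞ :=
  (∫⁻ x in Set.Ico (0:ℝ) 1, ENNReal.ofReal |g x| ^ p) ^ (1 / p)

/-- `L^p[0,1)` quasinorm of an `ℝ≥0∞`-valued function. -/
def LpNormE (p : ℝ) (g : ℝ → ℝ≥0∞) : ℝ≥0∞ :=
  (∫⁻ x in Set.Ico (0:ℝ) 1, g x ^ p) ^ (1 / p)

/-- `L^∞[0,1)` norm. -/
def LinfNorm (g : ℝ → ℝ) : ℝ≥0∞ := essSup (fun x => ENNReal.ofReal |g x|) μI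

/-- Dyadic maximal function `E^*(f) = sup_m |S_{2^m}(f)|`, valued in `ℝ≥0∞`. -/
def maxS (f : ℝ → ℝ) (x : ℝ) : ℝ≥0∞ := ⨆ m : ℕ, ENNReal.ofReal |S f (2 ^ m) x|

/-- Dyadic Hardy space quasinorm `‖f‖_{H_p} = ‖sup_m |S_{2^m} f|‖_{L^p}`. -/
def HpNorm (p : ℝ) (f : ℝ → ℝ) : ℝ≥0∞ :=
  (∫⁻ x in Set.Ico (0:ℝ) 1, maxS f x ^ p) ^ (1 / p)

/-- Dyadic (logical) addition `x ∔ y = Σ_k |x_k - y_k| 2^{-(k+1)}`. -/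
def dadd (x y : ℝ) : ℝ :=
  ∑' k : ℕ, |(digit k x : ℝ) - (digit k y : ℝ)| * (2 : ℝ)⁻¹ ^ (k + 1)

/-- The dyadic interval `I_N = [0, 2^{-N})`. -/
def IN (N : ℕ) : Set ℝ := Set.Ico (0:ℝ) (1 / 2 ^ N)

/-- `F_{n,1} = (w_n/Q_n) Σ_{j=1}^r Q_{n^{(j-1)}} w_{2^{n_j}} D_{2^{n_j}}`,
the first part of the Nörlund kernel decomposition. The sum over the binary
decomposition `n = 2^{n_1} + ⋯ + 2^{n_r}` is re-indexed over the set bit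
positions `i` of `n`; if `i = n_j` then `n^{(j-1)} = n mod 2^{i+1}`. -/
def F1 (q : ℕ → ℝ) (n : ℕ) (x : ℝ) : ℝ :=
  (walsh n x / Q q n) *
    ∑ i ∈ Finset.range (n + 1),
      if n.testBit i then Q q (n % 2 ^ (i + 1)) * walsh (2 ^ i) x * D (2 ^ i) x else 0

end Walsh

/-!
The counterexample is the Walsh block `f_N = D_{2^{N+1}} - D_{2^N} = Σ_{2^N ≤ i < 2^{N+1}} w_i`.
Its dyadic partial sums are `0` or `f_N = w_{2^N} D_{2^N}`, so by Paley's lemma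
`‖f_N‖_{H_p}^p = ‖D_{2^N}‖_p^p = 2^{N(p-1)}`.

On the shell `J_l = I_l \ I_{l+1}`, `l < N`, one has `D_j = j` for `j ≤ 2^l` and
`D_{2^l+1} = 2^l - 1`; hence, with `H` the harmonic numbers, the logarithmic mean of index
`n = 2^N + 2^l + 1` is `t_n f_N = ± ((2^l + 1) H_{2^l} - 1) / Q_n`. This is at least
`2^l (l + 2) / (4 (N + 3))` because `H_{2^l} ≥ (l + 2)/4` and `Q_n ≤ N + 3`. As `p ≤ 1`,
integrating the `p`-th power over the shells gives `‖t^* f_N‖_p^p ≥ (N / 16) 2^{N(p-1)}`, so the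
ratio to `‖f_N‖_{H_p}^p` is unbounded.
-/

namespace Walsh

open Set

lemma digit_of_mem_Ico {K j k : ℕ} (hk : k < K) {x : ℝ}
    (hx : x ∈ Ico ((j : ℝ) / 2 ^ K) ((j + 1) / 2 ^ K)) :
    digit k x = j / 2 ^ (K - 1 - k) % 2 := by
  have hK : (2 : ℝ) ^ K = 2 ^ (k + 1) * 2 ^ (K - 1 - k) := by
    rw [← pow_add]; congr 1; omega
  have hj : ⌊x * 2 ^ K⌋ = j := by
    rw [Int.floor_eq_iff]
    have := hx.1; have := hx.2
    constructor
    · push_cast; rwa [← div_le_iff₀ (by positivity)]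
    · rwa [← lt_div_iff₀ (by positivity)]
  have hfloor : ⌊x * 2 ^ (k + 1)⌋ = (j / 2 ^ (K - 1 - k) : ℕ) := by
    have : x * 2 ^ (k + 1) = x * 2 ^ K / ((2 ^ (K - 1 - k) : ℕ) : ℝ) := by
      rw [hK]; push_cast; field_simp
    rw [this, Int.floor_div_natCast, hj]; push_cast; rfl
  rw [digit, hfloor, Int.toNat_natCast]

lemma measurable_digit (k : ℕ) : Measurable (digit k) :=
  (measurable_from_top (f := fun z : ℤ => z.toNat % 2)).comp
    (Int.measurable_floor.comp (measurable_id.mul_const _))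

lemma eps_eq_zero_of_lt {k n : ℕ} (h : n < 2 ^ k) : eps k n = 0 := by
  simp [eps, Nat.testBit_eq_false_of_lt h]

lemma walsh_eq_neg_one_pow_sum {n K : ℕ} (hK : n < 2 ^ K) (x : ℝ) :
    walsh n x = (-1) ^ (∑ k ∈ Finset.range K, eps k n * digit k x) := by
  have hvanish : ∀ k, n < 2 ^ k → eps k n * digit k x = 0 := fun k hk => by
    rw [eps_eq_zero_of_lt hk, zero_mul]
  rw [walsh]
  congr 1
  rcases le_total (n + 1) K with h | h
  · refine Finset.sum_subset (Finset.range_subset_range.2 h) fun k _ hk => hvanish k ?_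
    exact (by simpa using hk : n < k).trans k.lt_two_pow_self
  · refine (Finset.sum_subset (Finset.range_subset_range.2 h) fun k _ hk => hvanish k ?_).symm
    exact hK.trans_le (Nat.pow_le_pow_right two_pos (by simpa using hk))

lemma walsh_mul (m n : ℕ) (x : ℝ) : walsh m x * walsh n x = walsh (m ^^^ n) x := by
  have hlt (a : ℕ) (ha : a ≤ m + n + (m ^^^ n)) : a < 2 ^ (m + n + (m ^^^ n)) :=
    a.lt_two_pow_self.trans_le (Nat.pow_le_pow_right two_pos ha)
  have hm := hlt m (by omega)
  have hn := hlt n (by omega)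
  have hmn := hlt (m ^^^ n) (by omega)
  rw [walsh_eq_neg_one_pow_sum hm, walsh_eq_neg_one_pow_sum hn, walsh_eq_neg_one_pow_sum hmn,
    ← pow_add, ← Finset.sum_add_distrib, neg_one_pow_eq_pow_mod_two, Finset.sum_nat_mod,
    neg_one_pow_eq_pow_mod_two (n := ∑ k ∈ _, _), Finset.sum_nat_mod]
  congr 2
  refine Finset.sum_congr rfl fun k _ => ?_
  simp only [eps, Nat.testBit_xor]
  have : digit k x < 2 := Nat.mod_lt _ two_pos
  cases m.testBit k <;> cases n.testBit k <;>
    simp only [Bool.false_eq_true, Bool.bne_true, Bool.bne_false, bne_self_eq_false, Bool.not_false,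
      ↓reduceIte, zero_mul, one_mul, add_zero, zero_add] <;> omega

lemma walsh_zero (x : ℝ) : walsh 0 x = 1 := by
  simp [walsh, eps]

lemma abs_walsh (n : ℕ) (x : ℝ) : |walsh n x| = 1 := by
  simp [walsh]

lemma walsh_two_pow (L : ℕ) (x : ℝ) : walsh (2 ^ L) x = (-1) ^ digit L x := by
  rw [walsh_eq_neg_one_pow_sum (Nat.pow_lt_pow_right one_lt_two L.lt_succ_self),
    Finset.sum_eq_single_of_mem L (by simp)]
  · simp [eps, Nat.testBit_two_pow_self]
  · intro k _ hk
    simp [eps, Nat.testBit_two_pow_of_ne hk.symm]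

lemma two_pow_xor_of_lt {L u : ℕ} (h : u < 2 ^ L) : 2 ^ L ^^^ u = 2 ^ L + u := by
  rw [← mul_one (2 ^ L), Nat.two_pow_add_eq_or_of_lt h, mul_one]
  refine Nat.eq_of_testBit_eq fun i => ?_
  rcases eq_or_ne L i with rfl | hi
  · simp [Nat.testBit_lt_two_pow h]
  · simp [Nat.testBit_two_pow_of_ne hi]

lemma walsh_two_pow_add {L u : ℕ} (h : u < 2 ^ L) (x : ℝ) :
    walsh (2 ^ L + u) x = walsh (2 ^ L) x * walsh u x := by
  rw [walsh_mul, two_pow_xor_of_lt h]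

lemma walsh_congr {n K : ℕ} (hK : n < 2 ^ K) {x y : ℝ}
    (h : ∀ k < K, digit k x = digit k y) : walsh n x = walsh n y := by
  rw [walsh_eq_neg_one_pow_sum hK, walsh_eq_neg_one_pow_sum hK]
  exact congrArg _ (Finset.sum_congr rfl fun k hk => by rw [h k (Finset.mem_range.1 hk)])

lemma walsh_eq_one_of_digit_eq_zero {n K : ℕ} (hK : n < 2 ^ K) {x : ℝ}
    (h : ∀ k < K, digit k x = 0) : walsh n x = 1 := by
  rw [walsh_eq_neg_one_pow_sum hK, Finset.sum_eq_zero fun k hk => by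
    rw [h k (Finset.mem_range.1 hk), mul_zero], pow_zero]

lemma measurable_walsh (n : ℕ) : Measurable (walsh n) :=
  measurable_from_top.comp (Finset.measurable_sum _ fun k _ =>
    measurable_from_top.comp (measurable_digit k))

lemma integrable_walsh (μ : Measure ℝ) [IsFiniteMeasure μ] (n : ℕ) : Integrable (walsh n) μ :=
  .of_bound (measurable_walsh n).aestronglyMeasurable 1
    (ae_of_all _ fun x => (abs_walsh n x).le)

lemma intervalIntegrable_walsh (n : ℕ) (a b : ℝ) : IntervalIntegrable (walsh n) volume a b :=
  ⟨integrable_walsh _ n, integrable_walsh _ n⟩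

lemma intervalIntegral_congr_Ico {f g : ℝ → ℝ} {a b : ℝ} (hab : a ≤ b) (h : EqOn f g (Ico a b)) :
    ∫ x in a..b, f x = ∫ x in a..b, g x := by
  simp only [intervalIntegral.integral_of_le hab, integral_Ioc_eq_integral_Ioo]
  exact setIntegral_congr_fun measurableSet_Ioo (h.mono Ioo_subset_Ico_self)

lemma intervalIntegral_eq_of_eqOn_Ico {g : ℝ → ℝ} {a b c : ℝ} (hab : a ≤ b)
    (h : EqOn g (fun _ => c) (Ico a b)) : ∫ x in a..b, g x = (b - a) * c := by
  rw [intervalIntegral_congr_Ico hab h, intervalIntegral.integral_const, smul_eq_mul]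

lemma walsh_two_pow_of_mem_Ico {L m : ℕ} {x : ℝ}
    (hx : x ∈ Ico ((m : ℝ) / 2 ^ (L + 1)) ((m + 1) / 2 ^ (L + 1))) :
    walsh (2 ^ L) x = (-1) ^ m := by
  rw [walsh_two_pow, digit_of_mem_Ico (lt_add_one L) hx, Nat.add_sub_cancel, Nat.sub_self,
    pow_zero, Nat.div_one, ← neg_one_pow_eq_pow_mod_two]

lemma integral_walsh_two_pow_Ico (L j : ℕ) :
    ∫ x in (j : ℝ) / 2 ^ L..(j + 1) / 2 ^ L, walsh (2 ^ L) x = 0 := by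
  have half (m : ℕ) : ∫ x in (m : ℝ) / 2 ^ (L + 1)..(m + 1) / 2 ^ (L + 1), walsh (2 ^ L) x
      = (-1) ^ m / 2 ^ (L + 1) := by
    rw [intervalIntegral_eq_of_eqOn_Ico (by gcongr; linarith)
      fun x hx => walsh_two_pow_of_mem_Ico hx]
    ring
  have hl : (j : ℝ) / 2 ^ L = ((2 * j : ℕ) : ℝ) / 2 ^ (L + 1) := by push_cast; ring
  have hm : ((2 * j : ℕ) + 1 : ℝ) / 2 ^ (L + 1) = ((2 * j + 1 : ℕ) : ℝ) / 2 ^ (L + 1) := by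
    push_cast; ring
  have hr : ((j : ℝ) + 1) / 2 ^ L = ((2 * j + 1 : ℕ) + 1 : ℝ) / 2 ^ (L + 1) := by push_cast; ring
  have hfirst := half (2 * j)
  rw [hm] at hfirst
  rw [hl, hr, ← intervalIntegral.integral_add_adjacent_intervals (intervalIntegrable_walsh _ _ _)
    (intervalIntegrable_walsh _ _ _), hfirst, half, pow_succ (-1 : ℝ)]
  ring

lemma integral_walsh_two_pow_add_Ico {L u : ℕ} (hu : u < 2 ^ L) (j : ℕ) :
    ∫ x in (j : ℝ) / 2 ^ L..(j + 1) / 2 ^ L, walsh (2 ^ L + u) x = 0 := by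
  have hconst : EqOn (walsh (2 ^ L + u)) (fun x => walsh u ((j : ℝ) / 2 ^ L) * walsh (2 ^ L) x)
      (Ico ((j : ℝ) / 2 ^ L) ((j + 1) / 2 ^ L)) := by
    intro x hx
    have hleft : (j : ℝ) / 2 ^ L ∈ Ico ((j : ℝ) / 2 ^ L) ((j + 1) / 2 ^ L) :=
      ⟨le_rfl, by gcongr; linarith⟩
    rw [walsh_two_pow_add hu, mul_comm]
    congr 1
    exact walsh_congr hu fun k hk => by rw [digit_of_mem_Ico hk hx, digit_of_mem_Ico hk hleft]
  rw [intervalIntegral_congr_Ico (by gcongr; linarith) hconst,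
    intervalIntegral.integral_const_mul, integral_walsh_two_pow_Ico, mul_zero]

lemma integral_walsh_eq_zero {n : ℕ} (hn : n ≠ 0) : ∫ x in Ico (0 : ℝ) 1, walsh n x = 0 := by
  obtain ⟨L, u, rfl, hu⟩ : ∃ L u, n = 2 ^ L + u ∧ u < 2 ^ L :=
    ⟨Nat.log 2 n, n - 2 ^ Nat.log 2 n, by have := Nat.pow_log_le_self 2 hn; omega, by
      have := Nat.pow_log_le_self 2 hn; have := Nat.lt_pow_succ_log_self one_lt_two n
      rw [pow_succ] at this; omega⟩
  have hsplit := intervalIntegral.sum_integral_adjacent_intervals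
    (a := fun j : ℕ => (j : ℝ) / 2 ^ L) (n := 2 ^ L) (μ := volume) (f := walsh (2 ^ L + u))
    fun k _ => intervalIntegrable_walsh _ _ _
  simp only [Nat.cast_zero, zero_div, Nat.cast_pow, Nat.cast_ofNat, Nat.cast_add_one,
    integral_walsh_two_pow_add_Ico hu, Finset.sum_const_zero] at hsplit
  rw [div_self (by positivity)] at hsplit
  rw [integral_Ico_eq_integral_Ioc, ← intervalIntegral.integral_of_le zero_le_one, ← hsplit]

lemma integral_walsh_mul_walsh (a b : ℕ) :
    ∫ x in Ico (0 : ℝ) 1, walsh a x * walsh b x = if a = b then 1 else 0 := by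
  simp_rw [walsh_mul]
  split_ifs with hab
  · simp [hab, walsh_zero]
  · exact integral_walsh_eq_zero (by simpa [Nat.xor_eq_zero_iff] using hab)

lemma D_two_pow_add {L i : ℕ} (h : i ≤ 2 ^ L) (x : ℝ) :
    D (2 ^ L + i) x = D (2 ^ L) x + walsh (2 ^ L) x * D i x := by
  simp only [D, Finset.sum_range_add, Finset.mul_sum]
  exact congrArg _ (Finset.sum_congr rfl fun u hu =>
    walsh_two_pow_add ((Finset.mem_range.1 hu).trans_le h) x)

lemma D_two_pow_succ (L : ℕ) (x : ℝ) :
    D (2 ^ (L + 1)) x = (1 + walsh (2 ^ L) x) * D (2 ^ L) x := by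
  rw [pow_succ, mul_two, D_two_pow_add le_rfl]
  ring

lemma D_two_pow_eq_prod (N : ℕ) (x : ℝ) :
    D (2 ^ N) x = ∏ k ∈ Finset.range N, (1 + walsh (2 ^ k) x) := by
  induction N with
  | zero => simp [D, walsh_zero]
  | succ N ih => rw [D_two_pow_succ, ih, Finset.prod_range_succ, mul_comm]

lemma D_two_pow_eq_zero_of_digit_eq_one {N k : ℕ} (hk : k < N) {x : ℝ} (h : digit k x = 1) :
    D (2 ^ N) x = 0 := by
  rw [D_two_pow_eq_prod]
  exact Finset.prod_eq_zero (Finset.mem_range.2 hk) (by rw [walsh_two_pow, h]; norm_num)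

lemma D_eq_of_digit_eq_zero {N j : ℕ} (hj : j ≤ 2 ^ N) {x : ℝ} (h : ∀ k < N, digit k x = 0) :
    D j x = j := by
  simp [D, Finset.sum_congr rfl fun i hi =>
    walsh_eq_one_of_digit_eq_zero ((Finset.mem_range.1 hi).trans_le hj) h]

/-- The shell `I_l \ I_{l+1}`. -/
def J (l : ℕ) : Set ℝ := Ico (1 / 2 ^ (l + 1)) (1 / 2 ^ l)

lemma J_eq_Ico (l : ℕ) :
    J l = Ico (((1 : ℕ) : ℝ) / 2 ^ (l + 1)) ((((1 : ℕ) : ℝ) + 1) / 2 ^ (l + 1)) := by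
  rw [J, pow_succ, Nat.cast_one, one_add_one_eq_two, div_mul_cancel_right₀ two_ne_zero, one_div,
    one_div]

lemma digit_of_mem_J_of_lt {k l : ℕ} (hk : k < l) {x : ℝ} (hx : x ∈ J l) : digit k x = 0 := by
  rw [J_eq_Ico] at hx
  rw [digit_of_mem_Ico (K := l + 1) (by omega) hx, Nat.div_eq_of_lt (Nat.one_lt_two_pow (by omega))]

lemma digit_of_mem_J_self {l : ℕ} {x : ℝ} (hx : x ∈ J l) : digit l x = 1 := by
  rw [J_eq_Ico] at hx
  rw [digit_of_mem_Ico (lt_add_one l) hx]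
  simp

lemma D_of_mem_J {l j : ℕ} (hj : j ≤ 2 ^ l) {x : ℝ} (hx : x ∈ J l) : D j x = j :=
  D_eq_of_digit_eq_zero hj fun _ hk => digit_of_mem_J_of_lt hk hx

lemma D_two_pow_add_one_of_mem_J {l : ℕ} {x : ℝ} (hx : x ∈ J l) :
    D (2 ^ l + 1) x = 2 ^ l - 1 := by
  rw [D_two_pow_add Nat.one_le_two_pow, D_of_mem_J le_rfl hx, D_of_mem_J Nat.one_le_two_pow hx,
    walsh_two_pow, digit_of_mem_J_self hx]
  push_cast
  ring

lemma exists_mem_J {N : ℕ} {x : ℝ} (hx : x ∈ Ico (1 / 2 ^ N) 1) : ∃ l < N, x ∈ J l := by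
  induction N with
  | zero => simp at hx
  | succ N ih =>
    by_cases h : 1 / 2 ^ N ≤ x
    · obtain ⟨l, hl, hxl⟩ := ih ⟨h, hx.2⟩
      exact ⟨l, hl.trans (lt_add_one N), hxl⟩
    · exact ⟨N, lt_add_one N, hx.1, not_le.1 h⟩

lemma pairwise_disjoint_J : Pairwise (Function.onFun Disjoint J) := by
  have : Antitone fun l : ℕ => (1 : ℝ) / 2 ^ l := fun a b hab =>
    one_div_le_one_div_of_le (by positivity) (pow_le_pow_right₀ one_le_two hab)
  exact this.pairwise_disjoint_on_Ico_succ

lemma IN_subset_Ico (N : ℕ) : IN N ⊆ Ico 0 1 :=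
  Ico_subset_Ico_right ((div_le_one₀ (by positivity)).2 (one_le_pow₀ one_le_two))

lemma J_subset_Ico (l : ℕ) : J l ⊆ Ico 0 1 :=
  (Ico_subset_Ico_left (by positivity)).trans (IN_subset_Ico l)

lemma volume_J (l : ℕ) : volume (J l) = ENNReal.ofReal (1 / 2 ^ (l + 1)) := by
  rw [J, Real.volume_Ico, pow_succ]
  congr 1
  ring

/-- Paley's lemma. -/
lemma D_two_pow_eq_indicator {N : ℕ} {x : ℝ} (hx : x ∈ Ico (0 : ℝ) 1) :
    D (2 ^ N) x = (IN N).indicator (fun _ => 2 ^ N) x := by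
  by_cases h : x ∈ IN N
  · rw [indicator_of_mem h]
    have hx' : x ∈ Ico (((0 : ℕ) : ℝ) / 2 ^ N) ((((0 : ℕ) : ℝ) + 1) / 2 ^ N) := by
      simpa [IN] using h
    rw [D_eq_of_digit_eq_zero le_rfl fun k hk => by rw [digit_of_mem_Ico hk hx', Nat.zero_div]]
    push_cast; rfl
  · rw [indicator_of_notMem h]
    obtain ⟨l, hl, hxl⟩ := exists_mem_J ⟨not_lt.1 fun h' => h ⟨hx.1, h'⟩, hx.2⟩
    exact D_two_pow_eq_zero_of_digit_eq_one hl (digit_of_mem_J_self hxl)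

lemma integrable_D (μ : Measure ℝ) [IsFiniteMeasure μ] (m : ℕ) : Integrable (D m) μ := by
  unfold D
  exact integrable_finsetSum _ fun k _ => integrable_walsh μ k

lemma integrable_walsh_mul_walsh (μ : Measure ℝ) [IsFiniteMeasure μ] (k i : ℕ) :
    Integrable (fun x => walsh k x * walsh i x) μ := by
  simp only [walsh_mul]
  exact integrable_walsh μ _

lemma integrable_D_mul_walsh (μ : Measure ℝ) [IsFiniteMeasure μ] (m i : ℕ) :
    Integrable (fun x => D m x * walsh i x) μ := by
  simp only [D, Finset.sum_mul]
  exact integrable_finsetSum _ fun k _ => integrable_walsh_mul_walsh μ k i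

lemma integral_D_mul_walsh (m i : ℕ) :
    ∫ x in Ico (0 : ℝ) 1, D m x * walsh i x = if i < m then 1 else 0 := by
  simp only [D, Finset.sum_mul]
  rw [integral_finsetSum _ fun k _ => integrable_walsh_mul_walsh _ k i]
  simp [integral_walsh_mul_walsh]

lemma sum_range_ite_lt {M : Type*} [AddCommMonoid M] (f : ℕ → M) (k m : ℕ) :
    ∑ i ∈ Finset.range k, (if i < m then f i else 0) = ∑ i ∈ Finset.range (min k m), f i := by
  rw [← Finset.sum_filter]
  congr 1
  ext i
  simp

def fN (N : ℕ) (x : ℝ) : ℝ := D (2 ^ (N + 1)) x - D (2 ^ N) x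

lemma fN_eq (N : ℕ) (x : ℝ) : fN N x = walsh (2 ^ N) x * D (2 ^ N) x := by
  rw [fN, pow_succ, mul_two, D_two_pow_add le_rfl, add_sub_cancel_left]

lemma integrable_fN (N : ℕ) : Integrable (fN N) (volume.restrict (Ico 0 1)) :=
  (integrable_D _ _).sub (integrable_D _ _)

lemma S_fN (N k : ℕ) (x : ℝ) :
    S (fN N) k x = D (min k (2 ^ (N + 1))) x - D (min k (2 ^ N)) x := by
  have hcoeff (i : ℕ) : ∫ t in Ico (0 : ℝ) 1, fN N t * walsh i t
      = (if i < 2 ^ (N + 1) then 1 else 0) - (if i < 2 ^ N then 1 else 0) := by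
    simp only [fN, sub_mul]
    rw [integral_sub (integrable_D_mul_walsh _ _ _) (integrable_D_mul_walsh _ _ _),
      integral_D_mul_walsh, integral_D_mul_walsh]
  simp only [S, hcoeff, sub_mul, ite_mul, one_mul, zero_mul, Finset.sum_sub_distrib,
    sum_range_ite_lt]
  rfl

lemma S_fN_two_pow_add {N m : ℕ} (hm : m ≤ 2 ^ N) (x : ℝ) :
    S (fN N) (2 ^ N + m) x = walsh (2 ^ N) x * D m x := by
  rw [S_fN, min_eq_left (by rw [pow_succ]; omega), min_eq_right (by omega), D_two_pow_add hm,
    add_sub_cancel_left]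

lemma S_fN_eq_zero_of_le {N k : ℕ} (hk : k ≤ 2 ^ N) (x : ℝ) : S (fN N) k x = 0 := by
  rw [S_fN, min_eq_left hk, min_eq_left (hk.trans (by rw [pow_succ]; omega)), sub_self]

lemma maxS_fN (N : ℕ) (x : ℝ) : maxS (fN N) x = ENNReal.ofReal |fN N x| := by
  have hS (m : ℕ) : S (fN N) (2 ^ m) x = if N < m then fN N x else 0 := by
    split_ifs with h
    · rw [S_fN, min_eq_right (Nat.pow_le_pow_right two_pos h),
        min_eq_right (Nat.pow_le_pow_right two_pos h.le), fN]
    · exact S_fN_eq_zero_of_le (Nat.pow_le_pow_right two_pos (not_lt.1 h)) x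
  refine le_antisymm (iSup_le fun m => ?_) ?_
  · rw [hS]; split_ifs <;> simp
  · exact le_of_eq_of_le (by rw [hS, if_pos (lt_add_one N)]) (le_iSup _ (N + 1))

lemma t_eq_sum_range (q : ℕ → ℝ) (n : ℕ) (f : ℝ → ℝ) (x : ℝ) :
    t q n f x = 1 / Q q n * ∑ i ∈ Finset.range n, q i * S f (n - i) x := by
  rw [t]
  congr 1
  refine Finset.sum_nbij' (fun k => n - k) (fun i => n - i) ?_ ?_ ?_ ?_ ?_ <;>
    intro a ha <;> simp only [Finset.mem_Icc, Finset.mem_range] at ha ⊢ <;>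
    first | omega | rw [Nat.sub_sub_self ha.2]

lemma t_fN (q : ℕ → ℝ) {N m : ℕ} (hm : m ≤ 2 ^ N) (x : ℝ) :
    t q (2 ^ N + m) (fN N) x
      = walsh (2 ^ N) x * (1 / Q q (2 ^ N + m) * ∑ i ∈ Finset.range m, q i * D (m - i) x) := by
  rw [t_eq_sum_range, add_comm (2 ^ N) m, Finset.sum_range_add,
    Finset.sum_eq_zero (s := Finset.range (2 ^ N))
      fun i _ => by rw [S_fN_eq_zero_of_le (by omega), mul_zero], add_zero, Finset.mul_sum,
    Finset.mul_sum, Finset.mul_sum]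
  refine Finset.sum_congr rfl fun i hi => ?_
  rw [show m + 2 ^ N - i = 2 ^ N + (m - i) by have := Finset.mem_range.1 hi; omega,
    S_fN_two_pow_add (by omega)]
  ring

def logWeight (j : ℕ) : ℝ := if j = 0 then 1 else 1 / j

lemma Q_logWeight_succ (n : ℕ) : Q logWeight (n + 1) = 1 + harmonic n := by
  simp [Q, Finset.sum_range_succ', harmonic, logWeight, add_comm]

lemma one_le_harmonic {n : ℕ} (hn : n ≠ 0) : 1 ≤ harmonic n := by
  obtain ⟨m, rfl⟩ := Nat.exists_eq_succ_of_ne_zero hn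
  rw [harmonic, Finset.sum_range_succ']
  simp only [zero_add, Nat.cast_one, inv_one, le_add_iff_nonneg_left]
  positivity

lemma Q_logWeight_succ_le {n N : ℕ} (hn : n ≤ 2 ^ (N + 1)) : Q logWeight (n + 1) ≤ N + 3 := by
  have hlog : Real.log n ≤ N + 1 := by
    rcases n.eq_zero_or_pos with rfl | hpos
    · simp only [Nat.cast_zero, Real.log_zero]; positivity
    calc Real.log n ≤ Real.log (2 ^ (N + 1)) :=
          Real.log_le_log (by positivity) (by exact_mod_cast hn)
      _ = (N + 1) * Real.log 2 := by rw [Real.log_pow]; push_cast; ring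
      _ ≤ N + 1 := by nlinarith [Real.log_two_lt_d9]
  rw [Q_logWeight_succ]
  linarith [harmonic_le_one_add_log n]

lemma add_two_div_four_le_harmonic_two_pow (l : ℕ) : ((l : ℝ) + 2) / 4 ≤ harmonic (2 ^ l) := by
  have hone : (1 : ℝ) ≤ harmonic (2 ^ l) := by exact_mod_cast one_le_harmonic (by positivity)
  have hlog : (l : ℝ) / 2 ≤ harmonic (2 ^ l) :=
    calc (l : ℝ) / 2 ≤ l * Real.log 2 := by
          nlinarith [Real.log_two_gt_d9, (l.cast_nonneg : (0 : ℝ) ≤ l)]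
      _ = Real.log (2 ^ l) := by rw [Real.log_pow]
      _ ≤ Real.log ((2 ^ l + 1 : ℕ) : ℝ) := Real.log_le_log (by positivity) (by push_cast; linarith)
      _ ≤ harmonic (2 ^ l) := log_add_one_le_harmonic _
  linarith

lemma sum_logWeight_mul_D_of_mem_J {l : ℕ} {x : ℝ} (hx : x ∈ J l) :
    ∑ i ∈ Finset.range (2 ^ l + 1), logWeight i * D (2 ^ l + 1 - i) x
      = (2 ^ l + 1) * harmonic (2 ^ l) - 1 := by
  have hterm : ∀ i ∈ Finset.range (2 ^ l),
      logWeight (i + 1) * D (2 ^ l + 1 - (i + 1)) x = (2 ^ l + 1) * (↑(i + 1) : ℝ)⁻¹ - 1 := by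
    intro i hi
    rw [logWeight, if_neg (by omega), Nat.add_sub_add_right, D_of_mem_J (Nat.sub_le _ _) hx,
      Nat.cast_sub (Finset.mem_range.1 hi).le]
    push_cast
    field_simp
    ring
  rw [Finset.sum_range_succ', Finset.sum_congr rfl hterm, Finset.sum_sub_distrib, ← Finset.mul_sum,
    Nat.sub_zero, D_two_pow_add_one_of_mem_J hx]
  simp [harmonic, logWeight]

lemma le_tstar_fN_of_mem_J {N l : ℕ} (hl : l < N) {x : ℝ} (hx : x ∈ J l) :
    ENNReal.ofReal (2 ^ l * ((l + 2) / (4 * (N + 3)))) ≤ tstar logWeight (fN N) x := by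
  have hlN : 2 ^ l + 1 ≤ 2 ^ N := Nat.pow_lt_pow_right one_lt_two hl
  have hQ : Q logWeight (2 ^ N + (2 ^ l + 1)) ≤ N + 3 := by
    rw [← add_assoc]; exact Q_logWeight_succ_le (by rw [pow_succ]; omega)
  have hQpos : 0 < Q logWeight (2 ^ N + (2 ^ l + 1)) := by
    rw [← add_assoc, Q_logWeight_succ]
    have : (1 : ℝ) ≤ harmonic (2 ^ N + 2 ^ l) := by exact_mod_cast one_le_harmonic (by positivity)
    linarith
  have hH := add_two_div_four_le_harmonic_two_pow l
  have hpow : (0 : ℝ) < 2 ^ l := by positivity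
  have hH1 : (1 : ℝ) ≤ harmonic (2 ^ l) := by exact_mod_cast one_le_harmonic (by positivity)
  have ht : |t logWeight (2 ^ N + (2 ^ l + 1)) (fN N) x|
      = ((2 ^ l + 1) * harmonic (2 ^ l) - 1) / Q logWeight (2 ^ N + (2 ^ l + 1)) := by
    rw [t_fN _ hlN, sum_logWeight_mul_D_of_mem_J hx, abs_mul, abs_walsh, one_mul,
      abs_of_nonneg (mul_nonneg (one_div_nonneg.2 hQpos.le) (by nlinarith)), one_div_mul_eq_div]
  calc ENNReal.ofReal (2 ^ l * ((l + 2) / (4 * (N + 3))))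
      ≤ ENNReal.ofReal |t logWeight (2 ^ N + (2 ^ l + 1)) (fN N) x| := by
        refine ENNReal.ofReal_le_ofReal ?_
        rw [ht]
        calc (2 : ℝ) ^ l * ((l + 2) / (4 * (N + 3))) = 2 ^ l * ((l + 2) / 4) / (N + 3) := by
              field_simp
          _ ≤ _ := div_le_div₀ (by nlinarith) (by nlinarith) hQpos hQ
    _ ≤ tstar logWeight (fN N) x :=
        le_iSup₂ (f := fun n (_ : n ∈ Ici 1) => ENNReal.ofReal |t logWeight n (fN N) x|) _
          (mem_Ici.2 (Nat.le_add_left 1 _))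

lemma sum_setLIntegral_J_le (g : ℝ → ℝ≥0∞) (N : ℕ) :
    ∑ l ∈ Finset.range N, ∫⁻ x in J l, g x ≤ ∫⁻ x in Ico 0 1, g x := by
  rw [← lintegral_biUnion_finset (fun a _ b _ hab => pairwise_disjoint_J hab)
    (fun l _ => measurableSet_Ico) g]
  exact lintegral_mono_set (iUnion₂_subset fun l _ => J_subset_Ico l)

lemma rpow_div_self_le_of_le {p a b : ℝ} (hp : p ≤ 1) (ha : 0 < a) (hab : a ≤ b) :
    b ^ p / b ≤ a ^ p / a := by
  rw [← Real.rpow_sub_one (ha.trans_le hab).ne', ← Real.rpow_sub_one ha.ne']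
  exact Real.rpow_le_rpow_of_nonpos ha hab (by linarith)

lemma ofReal_le_setLIntegral_J_tstar_fN {p : ℝ} (hp : 0 < p) (hp1 : p ≤ 1) {N l : ℕ} (hl : l < N) :
    ENNReal.ofReal ((2 ^ N) ^ p / 2 ^ N * ((l + 2) / (4 * (N + 3))) / 2)
      ≤ ∫⁻ x in J l, tstar logWeight (fN N) x ^ p := by
  set b : ℝ := (l + 2) / (4 * (N + 3)) with hb
  have hb0 : 0 ≤ b := by positivity
  have hb1 : b ≤ 1 := by
    rw [hb, div_le_one (by positivity)]
    have : (l : ℝ) ≤ N := by exact_mod_cast hl.le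
    linarith
  have hreal : (2 ^ N) ^ p / 2 ^ N * b / 2 ≤ (2 ^ l * b) ^ p * (1 / 2 ^ (l + 1)) :=
    calc (2 ^ N) ^ p / 2 ^ N * b / 2 ≤ (2 ^ l) ^ p / 2 ^ l * b ^ p / 2 := by
          gcongr ?_ * ?_ / 2
          · exact rpow_div_self_le_of_le hp1 (by positivity) (pow_le_pow_right₀ one_le_two hl.le)
          · exact Real.self_le_rpow_of_le_one hb0 hb1 hp1
      _ = (2 ^ l * b) ^ p * (1 / 2 ^ (l + 1)) := by
          rw [Real.mul_rpow (by positivity) hb0, pow_succ]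
          ring
  calc ENNReal.ofReal ((2 ^ N) ^ p / 2 ^ N * b / 2)
      ≤ ENNReal.ofReal (2 ^ l * b) ^ p * volume (J l) := by
        rw [volume_J, ENNReal.ofReal_rpow_of_nonneg (by positivity) hp.le,
          ← ENNReal.ofReal_mul (by positivity)]
        exact ENNReal.ofReal_le_ofReal hreal
    _ = ∫⁻ x in J l, ENNReal.ofReal (2 ^ l * b) ^ p := (setLIntegral_const _ _).symm
    _ ≤ _ := setLIntegral_mono' measurableSet_Ico fun x hx =>
          ENNReal.rpow_le_rpow (le_tstar_fN_of_mem_J hl hx) hp.le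

lemma ofReal_le_lintegral_tstar_fN {p : ℝ} (hp : 0 < p) (hp1 : p ≤ 1) (N : ℕ) :
    ENNReal.ofReal (N / 16 * ((2 ^ N) ^ p / 2 ^ N))
      ≤ ∫⁻ x in Ico 0 1, tstar logWeight (fN N) x ^ p := by
  have hsum (n : ℕ) : ∑ l ∈ Finset.range n, ((l : ℝ) + 2) = n * (n + 3) / 2 := by
    induction n with
    | zero => simp
    | succ n ih => rw [Finset.sum_range_succ, ih]; push_cast; ring
  calc ENNReal.ofReal (N / 16 * ((2 ^ N) ^ p / 2 ^ N))
      = ∑ l ∈ Finset.range N,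
          ENNReal.ofReal ((2 ^ N) ^ p / 2 ^ N * ((l + 2) / (4 * (N + 3))) / 2) := by
        rw [← ENNReal.ofReal_sum_of_nonneg fun l _ => by positivity, ← Finset.sum_div,
          ← Finset.mul_sum, ← Finset.sum_div, hsum]
        congr 1
        field_simp
        ring
    _ ≤ ∑ l ∈ Finset.range N, ∫⁻ x in J l, tstar logWeight (fN N) x ^ p :=
        Finset.sum_le_sum fun l hl =>
          ofReal_le_setLIntegral_J_tstar_fN hp hp1 (Finset.mem_range.1 hl)
    _ ≤ _ := sum_setLIntegral_J_le _ N

lemma lintegral_maxS_fN {p : ℝ} (hp : 0 < p) (N : ℕ) :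
    ∫⁻ x in Ico 0 1, maxS (fN N) x ^ p = ENNReal.ofReal ((2 ^ N) ^ p / 2 ^ N) := by
  have hcongr : ∀ x ∈ Ico (0 : ℝ) 1,
      maxS (fN N) x ^ p = (IN N).indicator (fun _ => ENNReal.ofReal ((2 ^ N) ^ p)) x := by
    intro x hx
    rw [maxS_fN, fN_eq, abs_mul, abs_walsh, one_mul, D_two_pow_eq_indicator hx]
    by_cases h : x ∈ IN N
    · simp only [indicator_of_mem h, abs_pow, abs_two]
      rw [ENNReal.ofReal_rpow_of_nonneg (by positivity) hp.le]
    · simp [indicator_of_notMem h, ENNReal.zero_rpow_of_pos hp]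
  have hmeas : MeasurableSet (IN N) := measurableSet_Ico
  rw [setLIntegral_congr_fun measurableSet_Ico hcongr, lintegral_indicator hmeas,
    Measure.restrict_restrict hmeas, inter_eq_left.2 (IN_subset_Ico N), setLIntegral_const, IN,
    Real.volume_Ico, ← ENNReal.ofReal_mul (by positivity)]
  congr 1
  ring

lemma HpNorm_fN_lt_top {p : ℝ} (hp : 0 < p) (N : ℕ) : HpNorm p (fN N) < ⊤ := by
  rw [HpNorm, lintegral_maxS_fN hp]
  exact ENNReal.rpow_lt_top_of_nonneg (by positivity) ENNReal.ofReal_ne_top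

lemma lintegral_rpow_le_of_LpNormE_le {p : ℝ} (hp : 0 < p) {g : ℝ → ℝ≥0∞} {f : ℝ → ℝ}
    {C : ℝ≥0∞} (h : LpNormE p g ≤ C * HpNorm p f) :
    ∫⁻ x in Ico 0 1, g x ^ p ≤ C ^ p * ∫⁻ x in Ico 0 1, maxS f x ^ p := by
  have hpow (F : ℝ≥0∞) : (F ^ (1 / p)) ^ p = F := by
    rw [← ENNReal.rpow_mul, one_div_mul_cancel hp.ne', ENNReal.rpow_one]
  have := ENNReal.rpow_le_rpow h hp.le
  rwa [ENNReal.mul_rpow_of_nonneg _ _ hp.le, LpNormE, HpNorm, hpow, hpow] at this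

end Walsh

/-- the maximal operator of the Nörlund logarithmic means
(`q_0 = 1`, `q_j = 1/j`) is not bounded from `H_p[0,1)` to `L^p[0,1)` for any
`p ∈ (0,1]`. -/
theorem logarithmic_maximal_not_bounded (p : ℝ) (hp1 : 0 < p) (hp2 : p ≤ 1) :
    ¬ ∃ C : ℝ≥0, ∀ f : ℝ → ℝ, MeasureTheory.Integrable f Walsh.μI →
        Walsh.HpNorm p f < ⊤ →
        Walsh.LpNormE p
            (Walsh.tstar (fun j => if j = 0 then (1:ℝ) else 1 / (j:ℝ)) f)
          ≤ (C : ℝ≥0∞) * Walsh.HpNorm p f := by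
  rintro ⟨C, hC⟩
  obtain ⟨N, hN⟩ := exists_nat_gt (16 * (C : ℝ) ^ p)
  have hbound := (Walsh.ofReal_le_lintegral_tstar_fN hp1 hp2 N).trans
    (Walsh.lintegral_rpow_le_of_LpNormE_le hp1
      (hC _ (Walsh.integrable_fN N) (Walsh.HpNorm_fN_lt_top hp1 N)))
  rw [Walsh.lintegral_maxS_fN hp1, ← ENNReal.ofReal_coe_nnreal,
    ENNReal.ofReal_rpow_of_nonneg C.coe_nonneg hp1.le, ← ENNReal.ofReal_mul (by positivity),
    ENNReal.ofReal_le_ofReal_iff (by positivity)] at hbound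
  have := le_of_mul_le_mul_right hbound (by positivity)
  linarith
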